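/- For the FTRL dynamic with regularizer h and for any x* ∈ Δ^n, define the storage function L(q) = h*(q) − ⟨q, x*⟩ + h(x*). Then (i) L(q) ≥ 0 for every q ∈ ℝ^n, and (ii) for every initial state q⁰ ∈ ℝ^n, every continuous payoff stream p : [0,∞) → ℝ^n, and every t ≥ 0, with q(t) = q⁰ + ∫₀ᵗ p(τ) dτ and x(t) = f(q(t)), one has L(q(t)) = L(q⁰) + ∫₀ᵗ ⟨x(τ) − x*, p(τ)⟩ dτ. That is, the FTRL learning operator with shift x* is finitely lossless. -/

import Mathlib

open scoped BigOperators
open MeasureTheory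

noncomputable section

/-- The standard probability simplex in ℝⁿ. -/
def simplex (n : ℕ) : Set (Fin n → ℝ) := {x | (∀ j, 0 ≤ x j) ∧ ∑ j, x j = 1}

/-- Euclidean inner product on ℝⁿ. -/
def dot {n : ℕ} (a b : Fin n → ℝ) : ℝ := ∑ j, a j * b j

/-- The cumulative-payoff trajectory q(t) = q⁰ + ∫₀ᵗ p(τ) dτ. -/
def traj {n : ℕ} (q0 : Fin n → ℝ) (p : ℝ → Fin n → ℝ) (t : ℝ) : Fin n → ℝ :=
  q0 + ∫ τ in (0:ℝ)..t, p τ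

/-! Writing `h*(q) = ⟨q, f q⟩ - h (f q)`, maximality of `f q` gives `L ≥ 0` (compare with `x*`) and
the subgradient inequality `L q' - L q ≥ ⟨f q - x*, q' - q⟩`. Strict convexity makes the maximizer
unique, so `f` is continuous by Berge's maximum theorem; a function whose subgradients form a
continuous field is differentiable with that field as derivative, and the chain rule along `q(t)`
followed by the fundamental theorem of calculus gives the balance equation. -/

open Set Filter Topology

theorem simplex_eq_stdSimplex (n : ℕ) : simplex n = stdSimplex ℝ (Fin n) := rfl

/-- Berge's maximum theorem, in the case of a unique maximizer. -/
theorem continuous_of_isMaxOn_of_unique {X Y : Type*} [TopologicalSpace X] [TopologicalSpace Y]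
    {K : Set Y} (hK : IsCompact K) {φ : X × Y → ℝ} (hφ : ContinuousOn φ (univ ×ˢ K))
    {g : X → Y} (hgK : ∀ x, g x ∈ K) (hg : ∀ x, IsMaxOn (fun y => φ (x, y)) K (g x))
    (huniq : ∀ x, ∀ y ∈ K, IsMaxOn (fun y => φ (x, y)) K y → y = g x) : Continuous g := by
  refine continuous_iff_continuousAt.2 fun x => hK.tendsto_nhds_of_unique_mapClusterPt
    (.of_forall hgK) fun y hy hclus => huniq x y hy fun z hz => ?_
  have hgraph : MapClusterPt (x, y) (𝓝 x) fun x' => (x', g x') := by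
    rw [((𝓝 x).basis_sets.prod_nhds (𝓝 y).basis_sets).mapClusterPt_iff_frequently]
    rintro ⟨s, t⟩ ⟨hs, ht⟩
    exact ((mapClusterPt_iff_frequently.1 hclus t ht).and_eventually hs).mono
      fun _ h => ⟨h.2, h.1⟩
  have hgap : ContinuousWithinAt (fun p : X × Y => φ p - φ (p.1, z)) (univ ×ˢ K) (x, y) :=
    (hφ _ ⟨trivial, hy⟩).sub <| (hφ _ ⟨trivial, hz⟩).comp
      (continuous_fst.prodMk continuous_const).continuousWithinAt fun _ _ => ⟨trivial, hz⟩
  have hlim := hgraph.tendsto_comp' <| hgap.tendsto.mono_left <|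
    inf_le_inf_left _ <| le_principal_iff.2 <| mem_map.2 <| univ_mem' fun x' => ⟨trivial, hgK x'⟩
  exact sub_nonneg.1 <| isClosed_Ici.mem_of_mapClusterPt hlim
    (.of_forall fun x' => sub_nonneg.2 (hg x' hz))

theorem hasFDerivAt_of_forall_le_sub {E : Type*} [NormedAddCommGroup E] [NormedSpace ℝ E]
    {L : E → ℝ} {a : E → E →L[ℝ] ℝ} (hsub : ∀ y z, a y (z - y) ≤ L z - L y) {x : E}
    (ha : ContinuousAt a x) : HasFDerivAt L (a x) x := by
  have hbound : ∀ y, ‖L y - L x - a x (y - x)‖ ≤ ‖a y - a x‖ * ‖y - x‖ := fun y => by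
    have hlow := hsub x y
    have hup : a y (x - y) ≤ L x - L y := hsub y x
    have hop := (a y - a x).le_opNorm (y - x)
    rw [sub_apply, Real.norm_eq_abs] at hop
    rw [← neg_sub y x, map_neg] at hup
    rw [Real.norm_eq_abs, abs_of_nonneg (by linarith)]
    linarith [le_abs_self (a y (y - x) - a x (y - x))]
  have hsmall : (fun y => ‖a y - a x‖) =o[𝓝 x] fun _ => (1 : ℝ) :=
    (Asymptotics.isLittleO_one_iff ℝ).2 (tendsto_iff_norm_sub_tendsto_zero.1 ha)
  refine .of_isLittleO <| (Asymptotics.isBigO_of_le _ fun y =>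
    (hbound y).trans (Real.le_norm_self _)).trans_isLittleO ?_
  simpa using (hsmall.mul_isBigO (Asymptotics.isBigO_refl (fun y => ‖y - x‖) _)).norm_right

theorem sub_eq_integral_of_forall_le_sub {E : Type*} [NormedAddCommGroup E] [NormedSpace ℝ E]
    {L : E → ℝ} {a : E → E →L[ℝ] ℝ} (hsub : ∀ y z, a y (z - y) ≤ L z - L y) (ha : Continuous a)
    {γ γ' : ℝ → E} (hγ : ∀ t, HasDerivAt γ (γ' t) t) (hγ' : Continuous γ') (s t : ℝ) :
    L (γ t) - L (γ s) = ∫ τ in s..t, a (γ τ) (γ' τ) := by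
  have hγc : Continuous γ := continuous_iff_continuousAt.2 fun τ => (hγ τ).continuousAt
  refine (intervalIntegral.integral_eq_sub_of_hasDerivAt (f := fun τ => L (γ τ)) (fun τ _ => ?_)
    (((ha.comp hγc).clm_apply hγ').intervalIntegrable _ _)).symm
  exact (hasFDerivAt_of_forall_le_sub hsub ha.continuousAt).comp_hasDerivAt τ (hγ τ)

def dotProductCLM (ι : Type*) [Fintype ι] : (ι → ℝ) →L[ℝ] (ι → ℝ) →L[ℝ] ℝ :=
  (dotProductBilin ℝ ℝ).toContinuousBilinearMap

theorem dot_eq_dotProduct {n : ℕ} (a b : Fin n → ℝ) : dot a b = a ⬝ᵥ b := rfl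

theorem hasDerivAt_traj {n : ℕ} (q0 : Fin n → ℝ) {p : ℝ → Fin n → ℝ} (hp : Continuous p) (t : ℝ) :
    HasDerivAt (traj q0 p) (p t) t :=
  (hp.integral_hasStrictDerivAt 0 t).hasDerivAt.const_add q0

@[simp]
theorem traj_zero {n : ℕ} (q0 : Fin n → ℝ) (p : ℝ → Fin n → ℝ) : traj q0 p 0 = q0 := by
  simp [traj]

section FTRL

variable {n : ℕ} {h : (Fin n → ℝ) → ℝ} {f : (Fin n → ℝ) → Fin n → ℝ}

theorem continuous_ftrl_choice (hconv : StrictConvexOn ℝ (simplex n) h)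
    (hcont : ContinuousOn h (simplex n))
    (hf : ∀ q, f q ∈ simplex n ∧ ∀ x ∈ simplex n, dot q x - h x ≤ dot q (f q) - h (f q)) :
    Continuous f := by
  have hφ : ContinuousOn (fun r : (Fin n → ℝ) × (Fin n → ℝ) => dot r.1 r.2 - h r.2)
      (univ ×ˢ simplex n) :=
    ((dotProductCLM (Fin n)).continuous₂.continuousOn).sub
      (hcont.comp continuousOn_snd fun _ hr => hr.2)
  have hK : IsCompact (simplex n) := simplex_eq_stdSimplex n ▸ isCompact_stdSimplex ℝ (Fin n)
  have hconvex : Convex ℝ (simplex n) := simplex_eq_stdSimplex n ▸ convex_stdSimplex ℝ (Fin n)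
  refine continuous_of_isMaxOn_of_unique hK hφ (fun q => (hf q).1) (fun q => (hf q).2)
    fun q y hy hmax => ?_
  have hconcave : StrictConcaveOn ℝ (simplex n) (fun x => dot q x - h x) :=
    ((dotProductBilin ℝ ℝ q).concaveOn hconvex).sub_strictConvexOn hconv
  exact hconcave.eq_of_isMaxOn hmax (fun x hx => (hf q).2 x hx) hy (hf q).1

variable {xstar : Fin n → ℝ} {L : (Fin n → ℝ) → ℝ}

theorem storage_nonneg
    (hf : ∀ q, f q ∈ simplex n ∧ ∀ x ∈ simplex n, dot q x - h x ≤ dot q (f q) - h (f q))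
    (hxstar : xstar ∈ simplex n)
    (hL : ∀ q, L q = (dot q (f q) - h (f q)) - dot q xstar + h xstar) (q : Fin n → ℝ) :
    0 ≤ L q := by
  linarith [hL q, (hf q).2 xstar hxstar]

theorem storage_sub_ge
    (hf : ∀ q, f q ∈ simplex n ∧ ∀ x ∈ simplex n, dot q x - h x ≤ dot q (f q) - h (f q))
    (hL : ∀ q, L q = (dot q (f q) - h (f q)) - dot q xstar + h xstar) (q q' : Fin n → ℝ) :
    dot (f q - xstar) (q' - q) ≤ L q' - L q := by
  have hmax := (hf q').2 (f q) (hf q).1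
  simp only [hL, dot_eq_dotProduct, sub_dotProduct, dotProduct_sub] at hmax ⊢
  linarith [dotProduct_comm q (f q), dotProduct_comm q' (f q), dotProduct_comm q xstar,
    dotProduct_comm q' xstar]

end FTRL

theorem ftrl_finitely_lossless
    (n : ℕ) (h : (Fin n → ℝ) → ℝ)
    (hconv : StrictConvexOn ℝ (simplex n) h)
    (hcont : ContinuousOn h (simplex n))
    (f : (Fin n → ℝ) → (Fin n → ℝ))
    (hf : ∀ q, f q ∈ simplex n ∧
      ∀ x ∈ simplex n, dot q x - h x ≤ dot q (f q) - h (f q))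
    (xstar : Fin n → ℝ) (hxstar : xstar ∈ simplex n)
    (L : (Fin n → ℝ) → ℝ)
    (hL : ∀ q, L q = (dot q (f q) - h (f q)) - dot q xstar + h xstar) :
    (∀ q, 0 ≤ L q) ∧
    (∀ (q0 : Fin n → ℝ) (p : ℝ → Fin n → ℝ), Continuous p → ∀ t : ℝ, 0 ≤ t →
      L (traj q0 p t) =
        L q0 + ∫ τ in (0:ℝ)..t, dot (f (traj q0 p τ) - xstar) (p τ)) := by
  refine ⟨storage_nonneg hf hxstar hL, fun q0 p hp t _ => ?_⟩
  have hgrad : Continuous fun q => dotProductCLM (Fin n) (f q - xstar) :=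
    (dotProductCLM (Fin n)).continuous.comp ((continuous_ftrl_choice hconv hcont hf).sub
      continuous_const)
  have hbalance := sub_eq_integral_of_forall_le_sub (storage_sub_ge hf hL) hgrad
    (hasDerivAt_traj q0 hp) hp 0 t
  rw [traj_zero] at hbalance
  exact eq_add_of_sub_eq' hbalance
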